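/- The quotient metric space (𝔾*, d) of countable connected rooted graphs modulo d = 0 is compact. -/

import Mathlib

open scoped ENNReal

structure RGraph where
  verts : Set ℕ
  adj : SimpleGraph verts
  root : verts

namespace RGraph

def Iso (A B : RGraph) : Prop :=
  ∃ e : A.adj ≃g B.adj, e A.root = B.root

def HasRCIS (A F : RGraph) : Prop :=
  ∃ S : Set A.verts, ∃ hroot : A.root ∈ S,
    (A.adj.induce S).Connected ∧
    ∃ e : A.adj.induce S ≃g F.adj, (e ⟨A.root, hroot⟩ : F.verts) = F.root

/-- `A` and `B` contain exactly the same isomorphism types of rooted connected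
induced subgraphs on at most `r` vertices. -/
def simUpTo (r : ℕ) (A B : RGraph) : Prop :=
  ∀ F : RGraph, Finite F.verts → Nat.card F.verts ≤ r →
    (A.HasRCIS F ↔ B.HasRCIS F)

/-- The radius of similarity `r(A,B) ∈ ℕ ∪ {∞}`. -/
noncomputable def rSimE (A B : RGraph) : ℕ∞ :=
  sSup {x : ℕ∞ | ∃ r : ℕ, x = (r : ℕ∞) ∧ simUpTo r A B}

/-- The similarity pseudometric `d(A,B) = 1/r(A,B)`, with `1/∞ = 0`. -/
noncomputable def dR (A B : RGraph) : ℝ≥0∞ :=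
  (sSup {x : ℝ≥0∞ | ∃ r : ℕ, x = (r : ℝ≥0∞) ∧ simUpTo r A B})⁻¹

end RGraph

/-- Countable connected rooted graph. -/
def CRGraph := {R : RGraph // R.adj.Connected}

noncomputable def dC (A B : CRGraph) : ℝ≥0∞ := RGraph.dR A.1 B.1

/-!
Along a subsequence, for every finite rooted graph `F` the truth of "`F` is a rooted connected
induced subgraph of the `n`-th graph" stabilises: these profiles lie in a Cantor space indexed by
the countably many isomorphism types of finite rooted graphs, which is compact and metrizable.
The limiting profile `P` is closed under taking rooted connected induced subgraphs and has the
amalgamation property over the root: copies of two members inside one far-out graph span a member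
containing both. Absorbing an enumeration of `P` one member at a time along a chain of finite
graphs on initial segments of `ℕ` gives a countable connected rooted graph whose finite rooted
connected induced subgraphs are exactly the members of `P`; the subsequence converges to it.
-/

namespace RGraph

open Filter SimpleGraph

variable {A B F F' : RGraph}

theorem Iso.symm (h : A.Iso B) : B.Iso A := by
  obtain ⟨e, he⟩ := h
  exact ⟨e.symm, by rw [← he, RelIso.symm_apply_apply]⟩

theorem hasRCIS_iff_exists_embedding :
    A.HasRCIS F ↔ F.adj.Connected ∧ ∃ φ : F.adj ↪g A.adj, φ F.root = A.root := by
  constructor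
  · rintro ⟨S, hroot, hconn, e, he⟩
    refine ⟨e.connected_iff.mp hconn, (Embedding.induce S).comp e.symm.toEmbedding, ?_⟩
    simp [← he]
  · rintro ⟨hconn, φ, hφ⟩
    have hroot : A.root ∈ Set.range φ := ⟨F.root, hφ⟩
    refine ⟨Set.range φ, hroot, φ.isoInduceRange.symm.connected_iff.mpr hconn,
      φ.isoInduceRange.symm, ?_⟩
    rw [RelIso.symm_apply_eq]
    exact Subtype.ext hφ.symm

theorem HasRCIS.connected (h : A.HasRCIS F) : F.adj.Connected :=
  (hasRCIS_iff_exists_embedding.mp h).1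

theorem HasRCIS.exists_embedding (h : A.HasRCIS F) :
    ∃ φ : F.adj ↪g A.adj, φ F.root = A.root :=
  (hasRCIS_iff_exists_embedding.mp h).2

theorem hasRCIS_of_embedding (hF : F.adj.Connected) (φ : F.adj ↪g A.adj)
    (hφ : φ F.root = A.root) : A.HasRCIS F :=
  hasRCIS_iff_exists_embedding.mpr ⟨hF, φ, hφ⟩

theorem HasRCIS.trans (h₁ : A.HasRCIS B) (h₂ : B.HasRCIS F) : A.HasRCIS F := by
  obtain ⟨φ, hφ⟩ := h₁.exists_embedding
  obtain ⟨ψ, hψ⟩ := h₂.exists_embedding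
  exact hasRCIS_of_embedding h₂.connected (φ.comp ψ) (by simp [hψ, hφ])

theorem HasRCIS.of_iso (h : A.HasRCIS F) (hF : F.Iso F') : A.HasRCIS F' := by
  obtain ⟨φ, hφ⟩ := h.exists_embedding
  obtain ⟨e, he⟩ := hF.symm
  exact hasRCIS_of_embedding (e.symm.connected_iff.mp h.connected)
    (φ.comp e.toEmbedding) (by simp [he, hφ])

theorem hasRCIS_congr (A : RGraph) (hF : F.Iso F') : A.HasRCIS F ↔ A.HasRCIS F' :=
  ⟨fun h => h.of_iso hF, fun h => h.of_iso hF.symm⟩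

theorem hasRCIS_of_range_subset (hF : F.adj.Connected) (φ : F.adj ↪g A.adj)
    (hφ : φ F.root = A.root) (ψ : B.adj ↪g A.adj) (hψ : ψ B.root = A.root)
    (hrange : Set.range φ ⊆ Set.range ψ) : B.HasRCIS F := by
  refine hasRCIS_of_embedding hF ((ψ.isoInduceRange.symm.toEmbedding.comp
    (induceHomOfLE A.adj hrange)).comp φ.isoInduceRange.toEmbedding) ?_
  apply ψ.injective
  rw [hψ]
  exact (congrArg Subtype.val (ψ.isoInduceRange.apply_symm_apply _)).trans hφ

def Code : Type := Σ k : ℕ, SimpleGraph (Set.Iic k)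

namespace Code

instance : Countable Code := inferInstanceAs (Countable (Σ k : ℕ, SimpleGraph (Set.Iic k)))

instance : Nonempty Code := ⟨⟨0, ⊥⟩⟩

def toRGraph (c : Code) : RGraph := ⟨Set.Iic c.1, c.2, ⟨0, Set.mem_Iic.2 (Nat.zero_le _)⟩⟩

instance (c : Code) : Finite c.toRGraph.verts := Set.finite_Iic c.1 |>.to_subtype

theorem card_verts (c : Code) : Nat.card c.toRGraph.verts = c.1 + 1 := by
  simp [toRGraph]

instance : Preorder Code where
  le c d := ∃ h : c.1 ≤ d.1, ∀ a b : Set.Iic c.1,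
    c.2.Adj a b ↔ d.2.Adj (Set.inclusion (Set.Iic_subset_Iic.2 h) a)
      (Set.inclusion (Set.Iic_subset_Iic.2 h) b)
  le_refl c := ⟨le_rfl, fun _ _ => Iff.rfl⟩
  le_trans _ _ _ := fun ⟨h₁, h₁'⟩ ⟨h₂, h₂'⟩ =>
    ⟨h₁.trans h₂, fun a b => (h₁' a b).trans (h₂' _ _)⟩

theorem adj_iff_of_le {c d : Code} (h : c ≤ d) {a b : Set.Iic c.1} {a' b' : Set.Iic d.1}
    (ha : (a : ℕ) = a') (hb : (b : ℕ) = b') : c.2.Adj a b ↔ d.2.Adj a' b' := by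
  obtain ⟨h, hadj⟩ := h
  rw [hadj a b]
  obtain rfl : Set.inclusion (Set.Iic_subset_Iic.2 h) a = a' := Subtype.ext ha
  obtain rfl : Set.inclusion (Set.Iic_subset_Iic.2 h) b = b' := Subtype.ext hb
  rfl

def point : Code := ⟨0, ⊥⟩

instance : Subsingleton point.toRGraph.verts :=
  ⟨fun a b => Subtype.ext <| (Nat.le_zero.1 a.2).trans (Nat.le_zero.1 b.2).symm⟩

def pointEmbedding (A : RGraph) : point.toRGraph.adj ↪g A.adj where
  toFun _ := A.root
  inj' _ _ _ := Subsingleton.elim _ _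
  map_rel_iff' := iff_of_false A.adj.irrefl (bot_adj _ _).mp

theorem exists_le_iso_induce {c : Code} (φ : c.toRGraph.adj ↪g A.adj) {U : Set A.verts}
    (hU : U.Finite) (hφU : Set.range φ ⊆ U) :
    ∃ d : Code, c ≤ d ∧ d.1 + 1 = U.ncard ∧ ∃ e : d.toRGraph.adj ≃g A.adj.induce U,
      ∀ (a : d.toRGraph.verts) (b : c.toRGraph.verts), (a : ℕ) = b →
        (e a : A.verts) = φ b := by
  classical
  have hcU : c.1 + 1 ≤ U.ncard := by
    rw [← c.card_verts, ← Set.ncard_range_of_injective φ.injective]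
    exact Set.ncard_le_ncard hφU hU
  set k := U.ncard - 1
  let f : Set.Iic k → A.verts := fun a => if h : (a : ℕ) ≤ c.1 then φ ⟨a, h⟩ else A.root
  have hf (a : Set.Iic k) (h : (a : ℕ) ≤ c.1) : f a = φ ⟨a, h⟩ := dif_pos h
  have hcard : Fintype.card (Set.Iic k) = hU.toFinset.card := by
    rw [← Set.ncard_eq_toFinset_card U hU]; simp; omega
  obtain ⟨g, hg⟩ := Set.MapsTo.exists_equiv_extend_of_card_eq (t := hU.toFinset)
    (s := {a : Set.Iic k | (a : ℕ) ≤ c.1}) (f := f) hcard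
    (fun a ha => by rw [Finset.mem_coe, Set.Finite.mem_toFinset, hf a ha]; exact hφU ⟨_, rfl⟩)
    (fun a ha b hb hab => by
      rw [hf a ha, hf b hb] at hab
      exact Subtype.ext (congrArg Subtype.val (φ.injective hab) :))
  let ψ : Set.Iic k ≃ U := g.trans (Equiv.subtypeEquivRight fun _ => hU.mem_toFinset)
  have hψ (a : Set.Iic k) (h : (a : ℕ) ≤ c.1) : (ψ a : A.verts) = φ ⟨a, h⟩ :=
    (hg a h).trans (hf a h)
  refine ⟨⟨k, (A.adj.induce U).comap ψ⟩, ⟨show c.1 ≤ k by omega, fun a b => ?_⟩,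
    show k + 1 = U.ncard by omega,
    Iso.comap ψ _, fun a b hab => ?_⟩
  · change _ ↔ A.adj.Adj (ψ _ : A.verts) (ψ _ : A.verts)
    rw [hψ (Set.inclusion _ a) a.2, hψ (Set.inclusion _ b) b.2]
    exact φ.map_adj_iff.symm
  · change (ψ a : A.verts) = _
    rw [hψ a (hab ▸ b.2)]
    congr

end Code

theorem hasRCIS_point (A : RGraph) : A.HasRCIS Code.point.toRGraph :=
  hasRCIS_of_embedding (connected_bot_iff.2 ⟨inferInstance, ⟨Code.point.toRGraph.root⟩⟩)
    (Code.pointEmbedding A) rfl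

theorem exists_iso_code (F : RGraph) [Finite F.verts] :
    ∃ c : Code, c.1 + 1 = Nat.card F.verts ∧ F.Iso c.toRGraph := by
  obtain ⟨c, -, hc, e, he⟩ := Code.exists_le_iso_induce (Code.pointEmbedding F) Set.finite_univ
    (Set.subset_univ _)
  refine ⟨c, by rw [hc, Set.ncard_univ], (e.trans F.adj.induceUnivIso).symm, ?_⟩
  rw [RelIso.symm_apply_eq]
  exact (he c.toRGraph.root Code.point.toRGraph.root rfl).symm

theorem simUpTo_of_forall_code {r : ℕ}
    (h : ∀ c : Code, c.1 < r → (A.HasRCIS c.toRGraph ↔ B.HasRCIS c.toRGraph)) :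
    simUpTo r A B := by
  intro F _ hF
  obtain ⟨c, hc, hFc⟩ := exists_iso_code F
  rw [hasRCIS_congr A hFc, hasRCIS_congr B hFc]
  exact h c (by omega)

theorem exists_code_le_of_hasRCIS {c c' : Code} (hc : A.HasRCIS c.toRGraph)
    (hc' : A.HasRCIS c'.toRGraph) :
    ∃ d : Code, c ≤ d ∧ d.1 ≤ c.1 + c'.1 + 1 ∧ A.HasRCIS d.toRGraph ∧
      d.toRGraph.HasRCIS c'.toRGraph := by
  obtain ⟨φ, hφ⟩ := hc.exists_embedding
  obtain ⟨φ', hφ'⟩ := hc'.exists_embedding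
  set U := Set.range φ ∪ Set.range φ'
  obtain ⟨d, hcd, hdU, e, he⟩ := Code.exists_le_iso_induce φ
    ((Set.finite_range φ).union (Set.finite_range φ')) Set.subset_union_left
  let ψ : d.toRGraph.adj ↪g A.adj := (Embedding.induce U).comp e.toEmbedding
  have hψ : ψ d.toRGraph.root = A.root := (he _ c.toRGraph.root rfl).trans hφ
  have hUconn : (A.adj.induce U).Connected :=
    induce_union_connected (φ.isoInduceRange.connected_iff.mp hc.connected).preconnected
      (φ'.isoInduceRange.connected_iff.mp hc'.connected).preconnected
      ⟨A.root, ⟨_, hφ⟩, ⟨_, hφ'⟩⟩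
  have hrange : Set.range φ' ⊆ Set.range ψ := fun x hx =>
    ⟨e.symm ⟨x, Set.subset_union_right hx⟩, congrArg Subtype.val (e.apply_symm_apply _)⟩
  refine ⟨d, hcd, ?_, hasRCIS_of_embedding (e.connected_iff.mpr hUconn) ψ hψ,
    hasRCIS_of_range_subset hc'.connected φ' hφ' ψ hψ hrange⟩
  have := Set.ncard_union_le (Set.range φ) (Set.range φ')
  rw [Set.ncard_range_of_injective φ.injective, Set.ncard_range_of_injective φ'.injective,
    Code.card_verts, Code.card_verts] at this
  omega

namespace Code

section Limit

variable {c : ℕ → Code}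

def limGraph (c : ℕ → Code) : SimpleGraph ℕ :=
  ⨆ i, (c i).2.map (Function.Embedding.subtype _)

theorem limGraph_adj (hc : Monotone c) (i : ℕ) (a b : Set.Iic (c i).1) :
    (limGraph c).Adj a b ↔ (c i).2.Adj a b := by
  simp only [limGraph, iSup_adj, map_adj, Function.Embedding.subtype_apply]
  constructor
  · rintro ⟨j, a', b', h, ha, hb⟩
    have him := (hc (le_max_right j i)).1
    exact (adj_iff_of_le (hc (le_max_right j i)) (a' := ⟨a, le_trans a.2 him⟩)
      (b' := ⟨b, le_trans b.2 him⟩) rfl rfl).2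
      ((adj_iff_of_le (hc (le_max_left j i)) ha hb).1 h)
  · exact fun h => ⟨i, a, b, h, rfl, rfl⟩

def limit (c : ℕ → Code) : RGraph :=
  ⟨⋃ i, Set.Iic (c i).1, (limGraph c).induce _,
    ⟨0, Set.mem_iUnion.2 ⟨0, Set.mem_Iic.2 (Nat.zero_le _)⟩⟩⟩

def toLimit (hc : Monotone c) (i : ℕ) : (c i).toRGraph.adj ↪g (limit c).adj where
  toFun a := ⟨a, Set.mem_iUnion_of_mem i a.2⟩
  inj' _ _ h := Subtype.ext (congrArg Subtype.val h :)
  map_rel_iff' := limGraph_adj hc i _ _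

theorem toLimit_root (hc : Monotone c) (i : ℕ) :
    toLimit hc i (c i).toRGraph.root = (limit c).root :=
  rfl

theorem exists_subset_range_toLimit (hc : Monotone c) {s : Set (limit c).verts}
    (hs : s.Finite) : ∃ i, s ⊆ Set.range (toLimit hc i) := by
  choose idx hidx using fun x : (limit c).verts => Set.mem_iUnion.1 x.2
  obtain ⟨i, hi⟩ := (hs.image idx).bddAbove
  refine ⟨i, fun x hx => ⟨⟨x, ?_⟩, rfl⟩⟩
  exact (Set.mem_Iic.1 (hidx x)).trans (hc (hi ⟨x, hx, rfl⟩)).1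

theorem limit_connected (hc : Monotone c) (hconn : ∀ i, (c i).toRGraph.adj.Connected) :
    (limit c).adj.Connected := by
  rw [connected_iff_exists_forall_reachable]
  refine ⟨(limit c).root, fun v => ?_⟩
  obtain ⟨i, hi⟩ := exists_subset_range_toLimit hc (Set.finite_singleton v)
  obtain ⟨a, rfl⟩ := hi rfl
  exact ((hconn i).preconnected (c i).toRGraph.root a).map (toLimit hc i).toHom

end Limit

end Code

def IsLimitProfile (B : ℕ → RGraph) (P : Code → Prop) : Prop :=
  ∀ c : Code, ∀ᶠ n in atTop, ((B n).HasRCIS c.toRGraph ↔ P c)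

theorem exists_isLimitProfile (B : ℕ → RGraph) :
    ∃ φ : ℕ → ℕ, StrictMono φ ∧ ∃ P, IsLimitProfile (B ∘ φ) P := by
  classical
  obtain ⟨q, φ, hφ, hlim⟩ :=
    CompactSpace.tendsto_subseq fun n (c : Code) => decide ((B n).HasRCIS c.toRGraph)
  refine ⟨φ, hφ, fun c => q c = true, fun c => ?_⟩
  have hc := tendsto_pi_nhds.1 hlim c
  rw [nhds_discrete, tendsto_pure] at hc
  filter_upwards [hc] with n hn
  simp [← hn]

namespace IsLimitProfile

variable {B : ℕ → RGraph} {P : Code → Prop}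

theorem eventually_forall_lt (hP : IsLimitProfile B P) (r : ℕ) :
    ∀ᶠ n in atTop, ∀ c : Code, c.1 < r → ((B n).HasRCIS c.toRGraph ↔ P c) := by
  have h := eventually_all.2 fun k : Fin r =>
    eventually_all.2 fun H : SimpleGraph (Set.Iic (k : ℕ)) => hP ⟨k, H⟩
  filter_upwards [h] with n hn
  rintro ⟨k, H⟩ hk
  exact hn ⟨k, hk⟩ H

theorem connected (hP : IsLimitProfile B P) {c : Code} (hc : P c) :
    c.toRGraph.adj.Connected := by
  obtain ⟨n, hn⟩ := (hP c).exists
  exact (hn.2 hc).connected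

theorem of_hasRCIS (hP : IsLimitProfile B P) {c d : Code} (hc : P c)
    (hcd : c.toRGraph.HasRCIS d.toRGraph) : P d := by
  obtain ⟨n, hn, hn'⟩ := ((hP c).and (hP d)).exists
  exact hn'.1 ((hn.2 hc).trans hcd)

theorem point (hP : IsLimitProfile B P) : P Code.point := by
  obtain ⟨n, hn⟩ := (hP Code.point).exists
  exact hn.1 (hasRCIS_point _)

theorem exists_le (hP : IsLimitProfile B P) {c c' : Code} (hc : P c) (hc' : P c') :
    ∃ d, c ≤ d ∧ P d ∧ d.toRGraph.HasRCIS c'.toRGraph := by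
  -- the amalgam built inside `B n` is small enough for `B n` to agree with `P` on it
  obtain ⟨n, hn, hn', hn_lt⟩ :=
    ((hP c).and ((hP c').and (hP.eventually_forall_lt (c.1 + c'.1 + 2)))).exists
  obtain ⟨d, hcd, hd, hnd, hdc'⟩ := exists_code_le_of_hasRCIS (hn.2 hc) (hn'.2 hc')
  exact ⟨d, hcd, (hn_lt d (by omega)).1 hnd, hdc'⟩

theorem exists_realization (hP : IsLimitProfile B P) :
    ∃ L : RGraph, L.adj.Connected ∧ ∀ c, L.HasRCIS c.toRGraph ↔ P c := by
  obtain ⟨e, he⟩ := exists_surjective_nat Code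
  have step (c : {c // P c}) (i : ℕ) :
      ∃ d : {d // P d}, c.1 ≤ d.1 ∧ (P (e i) → d.1.toRGraph.HasRCIS (e i).toRGraph) := by
    by_cases hi : P (e i)
    · obtain ⟨d, hcd, hd, hdi⟩ := hP.exists_le c.2 hi
      exact ⟨⟨d, hd⟩, hcd, fun _ => hdi⟩
    · exact ⟨c, le_rfl, hi.elim⟩
  choose next hle hnext using step
  let chain : ℕ → {c // P c} := fun i =>
    Nat.rec ⟨Code.point, hP.point⟩ (fun i c => next c i) i
  have hmono : Monotone fun i => (chain i).1 := monotone_nat_of_le_succ fun i => hle _ i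
  have hconn (i : ℕ) : (chain i).1.toRGraph.adj.Connected := hP.connected (chain i).2
  refine ⟨Code.limit _, Code.limit_connected hmono hconn,
    fun c => ⟨fun h => ?_, fun h => ?_⟩⟩
  · obtain ⟨φ, hφ⟩ := h.exists_embedding
    obtain ⟨i, hi⟩ := Code.exists_subset_range_toLimit hmono (Set.finite_range φ)
    exact hP.of_hasRCIS (chain i).2
      (hasRCIS_of_range_subset h.connected φ hφ _ (Code.toLimit_root hmono i) hi)
  · obtain ⟨i, rfl⟩ := he c
    exact (hasRCIS_of_embedding (hconn (i + 1)) (Code.toLimit hmono (i + 1))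
      (Code.toLimit_root hmono _)).trans (hnext _ i h)

theorem eventually_simUpTo (hP : IsLimitProfile B P) {L : RGraph}
    (hL : ∀ c, L.HasRCIS c.toRGraph ↔ P c) (r : ℕ) :
    ∀ᶠ n in atTop, simUpTo r (B n) L := by
  filter_upwards [hP.eventually_forall_lt r] with n hn
  exact simUpTo_of_forall_code fun c hc => (hn c hc).trans (hL c).symm

end IsLimitProfile

theorem dR_le_inv_of_simUpTo {r : ℕ} (h : simUpTo r A B) :
    dR A B ≤ (r : ℝ≥0∞)⁻¹ :=
  ENNReal.inv_le_inv.2 (le_sSup ⟨r, rfl, h⟩)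

end RGraph

/-- The (quotient of the) space of countable connected rooted graphs with the
similarity pseudometric is compact (stated as sequential compactness, which is
equivalent for (pseudo)metric spaces). -/
theorem compact_CRGraph (u : ℕ → CRGraph) :
    ∃ φ : ℕ → ℕ, StrictMono φ ∧ ∃ L : CRGraph,
      ∀ ε : ℝ≥0∞, 0 < ε → ∃ N : ℕ, ∀ n ≥ N, dC (u (φ n)) L < ε := by
  obtain ⟨φ, hφ, P, hP⟩ := RGraph.exists_isLimitProfile fun n => (u n).1
  obtain ⟨L, hLconn, hL⟩ := hP.exists_realization
  refine ⟨φ, hφ, ⟨L, hLconn⟩, fun ε hε => ?_⟩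
  obtain ⟨r, hr⟩ := ENNReal.exists_nat_gt (ENNReal.inv_ne_top.2 hε.ne')
  obtain ⟨N, hN⟩ := Filter.eventually_atTop.1 (hP.eventually_simUpTo hL r)
  exact ⟨N, fun n hn =>
    (RGraph.dR_le_inv_of_simUpTo (hN n hn)).trans_lt (ENNReal.inv_lt_iff_inv_lt.2 hr)⟩
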